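/- Suppose the curve evolves by the vortex filament equation ∂γ/∂t = k B (i.e. ν = μ = 0, α = k), and suppose k and τ are L-periodic in s for every t. Then the integrand of the bending-energy evolution is the exact arclength derivative −∂/∂s(2k²τ), and consequently the bending energy I₂(t) = ∫₀^L k(s,t)² ds is constant in t. -/

import Mathlib

open scoped BigOperators RealInnerProductSpace
open Complex

noncomputable section

abbrev E3 : Type := EuclideanSpace ℝ (Fin 3)

/-- Partial derivative with respect to the first (arclength) variable. -/
noncomputable def dS {V : Type} [NormedAddCommGroup V] [NormedSpace ℝ V]
    (F : ℝ → ℝ → V) : ℝ → ℝ → V := fun s t => deriv (fun x => F x t) s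

/-- Partial derivative with respect to the second (time) variable. -/
noncomputable def dT {V : Type} [NormedAddCommGroup V] [NormedSpace ℝ V]
    (F : ℝ → ℝ → V) : ℝ → ℝ → V := fun s t => deriv (fun x => F s x) t

/-- Complexification of a real vector in `ℝ³`. -/
noncomputable def cvec (v : E3) : Fin 3 → ℂ := fun i => (v i : ℂ)

/-- Bilinear extension of the real inner product to `ℂ³`. -/
noncomputable def cip (u v : Fin 3 → ℂ) : ℂ := ∑ i, u i * v i

/-- The phase `θ(s,t) = ∫₀^s τ(s',t) ds'`. -/
noncomputable def θf (τ : ℝ → ℝ → ℝ) : ℝ → ℝ → ℝ :=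
  fun s t => ∫ x in (0:ℝ)..s, τ x t

/-- The Hasimoto wave function `ψ = k e^{iθ}`. -/
noncomputable def ψf (k τ : ℝ → ℝ → ℝ) : ℝ → ℝ → ℂ :=
  fun s t => (k s t : ℂ) * Complex.exp (Complex.I * (θf τ s t : ℂ))

/-- The complexified frame vector `M = (N + iB) e^{iθ}`. -/
noncomputable def Mf (N B : ℝ → ℝ → E3) (τ : ℝ → ℝ → ℝ) : ℝ → ℝ → (Fin 3 → ℂ) :=
  fun s t => Complex.exp (Complex.I * (θf τ s t : ℂ)) •
    (cvec (N s t) + Complex.I • cvec (B s t))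

/-- `ω = ⟨∂M/∂t, T⟩` (bilinear inner product). -/
noncomputable def ωf (T N B : ℝ → ℝ → E3) (τ : ℝ → ℝ → ℝ) : ℝ → ℝ → ℂ :=
  fun s t => cip (dT (Mf N B τ) s t) (cvec (T s t))

section Aux
variable {V : Type} [NormedAddCommGroup V] [NormedSpace ℝ V]
lemma sliceS_contDiff {F : ℝ → ℝ → V} (hF : ContDiff ℝ (⊤ : ℕ∞) (Function.uncurry F)) (t : ℝ) :
    ContDiff ℝ (⊤ : ℕ∞) (fun x => F x t) :=
  hF.comp (contDiff_id.prodMk contDiff_const)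
lemma sliceT_contDiff {F : ℝ → ℝ → V} (hF : ContDiff ℝ (⊤ : ℕ∞) (Function.uncurry F)) (s : ℝ) :
    ContDiff ℝ (⊤ : ℕ∞) (fun x => F s x) :=
  hF.comp (contDiff_const.prodMk contDiff_id)
lemma hasDerivAt_dS {F : ℝ → ℝ → V} (hF : ContDiff ℝ (⊤ : ℕ∞) (Function.uncurry F)) (s t : ℝ) :
    HasDerivAt (fun x => F x t) (dS F s t) s :=
  ((sliceS_contDiff hF t).differentiable (by simp) s).hasDerivAt
lemma hasDerivAt_dT {F : ℝ → ℝ → V} (hF : ContDiff ℝ (⊤ : ℕ∞) (Function.uncurry F)) (s t : ℝ) :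
    HasDerivAt (fun x => F s x) (dT F s t) t :=
  ((sliceT_contDiff hF s).differentiable (by simp) t).hasDerivAt
lemma dS_eq_fderiv {F : ℝ → ℝ → V} (hF : ContDiff ℝ (⊤ : ℕ∞) (Function.uncurry F)) :
    Function.uncurry (dS F) = fun p : ℝ × ℝ =>
      fderiv ℝ (Function.uncurry F) p (1, 0) := by
  funext p
  obtain ⟨s, t⟩ := p
  have hg : HasDerivAt (fun x : ℝ => (x, t)) ((1 : ℝ), (0 : ℝ)) s :=
    HasDerivAt.prodMk (hasDerivAt_id s) (hasDerivAt_const s t)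
  have h := (hF.differentiable (by simp) (s, t)).hasFDerivAt.comp_hasDerivAt s hg
  exact h.deriv
lemma dT_eq_fderiv {F : ℝ → ℝ → V} (hF : ContDiff ℝ (⊤ : ℕ∞) (Function.uncurry F)) :
    Function.uncurry (dT F) = fun p : ℝ × ℝ =>
      fderiv ℝ (Function.uncurry F) p (0, 1) := by
  funext p
  obtain ⟨s, t⟩ := p
  have hg : HasDerivAt (fun x : ℝ => (s, x)) ((0 : ℝ), (1 : ℝ)) t :=
    HasDerivAt.prodMk (hasDerivAt_const t s) (hasDerivAt_id t)
  have h := (hF.differentiable (by simp) (s, t)).hasFDerivAt.comp_hasDerivAt t hg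
  exact h.deriv
lemma dS_contDiff {F : ℝ → ℝ → V} (hF : ContDiff ℝ (⊤ : ℕ∞) (Function.uncurry F)) :
    ContDiff ℝ (⊤ : ℕ∞) (Function.uncurry (dS F)) := by
  rw [dS_eq_fderiv hF]
  exact (hF.fderiv_right (by simp)).clm_apply contDiff_const
lemma dT_contDiff {F : ℝ → ℝ → V} (hF : ContDiff ℝ (⊤ : ℕ∞) (Function.uncurry F)) :
    ContDiff ℝ (⊤ : ℕ∞) (Function.uncurry (dT F)) := by
  rw [dT_eq_fderiv hF]
  exact (hF.fderiv_right (by simp)).clm_apply contDiff_const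
end Aux


theorem stmt18
    (γ T N B : ℝ → ℝ → E3) (k τ : ℝ → ℝ → ℝ)
    (hγsm : ContDiff ℝ (⊤ : ℕ∞) (Function.uncurry γ))
    (hTsm : ContDiff ℝ (⊤ : ℕ∞) (Function.uncurry T))
    (hNsm : ContDiff ℝ (⊤ : ℕ∞) (Function.uncurry N))
    (hBsm : ContDiff ℝ (⊤ : ℕ∞) (Function.uncurry B))
    (hksm : ContDiff ℝ (⊤ : ℕ∞) (Function.uncurry k))
    (hτsm : ContDiff ℝ (⊤ : ℕ∞) (Function.uncurry τ))
    (hkpos : ∀ s t, 0 < k s t)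
    (hTdef : ∀ s t, dS γ s t = T s t)
    (horth : ∀ s t, ⟪T s t, T s t⟫ = 1 ∧ ⟪N s t, N s t⟫ = 1 ∧
      ⟪B s t, B s t⟫ = 1 ∧ ⟪T s t, N s t⟫ = 0 ∧
      ⟪T s t, B s t⟫ = 0 ∧ ⟪N s t, B s t⟫ = 0)
    (hFS1 : ∀ s t, dS T s t = k s t • N s t)
    (hFS2 : ∀ s t, dS N s t = -(k s t) • T s t + τ s t • B s t)
    (hFS3 : ∀ s t, dS B s t = -(τ s t) • N s t)
    (ν μ α : ℝ → ℝ → ℝ)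
    (hνsm : ContDiff ℝ (⊤ : ℕ∞) (Function.uncurry ν))
    (hμsm : ContDiff ℝ (⊤ : ℕ∞) (Function.uncurry μ))
    (hαsm : ContDiff ℝ (⊤ : ℕ∞) (Function.uncurry α))
    (hkin : ∀ s t, dT γ s t = ν s t • T s t + μ s t • N s t + α s t • B s t)
    (hmixγ : ∀ s t, dS (dT γ) s t = dT (dS γ) s t)
    (hmixT : ∀ s t, dS (dT T) s t = dT (dS T) s t)
    (hmixN : ∀ s t, dS (dT N) s t = dT (dS N) s t)
    (hmixB : ∀ s t, dS (dT B) s t = dT (dS B) s t)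
    (hν0 : ∀ s t, ν s t = 0)
    (hμ0 : ∀ s t, μ s t = 0)
    (hαk : ∀ s t, α s t = k s t)
    (L : ℝ) (hL : 0 < L)
    (hkper : ∀ s t, k (s + L) t = k s t)
    (hτper : ∀ s t, τ (s + L) t = τ s t)
    :
    (∀ s t, 2 * (2 * (k s t)^2 * dS ν s t + k s t * dS k s t * ν s t -
        2 * k s t * τ s t * dS α s t - k s t * α s t * dS τ s t) =
      -(deriv (fun x => 2 * (k x t)^2 * τ x t) s)) ∧
      ∀ t₁ t₂, (∫ s in (0:ℝ)..L, (k s t₁)^2) = ∫ s in (0:ℝ)..L, (k s t₂)^2 := by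
  -- derivative of the function 2 k^2 τ in s
  have hEderiv : ∀ s t, deriv (fun x => 2 * (k x t)^2 * τ x t) s =
      4 * k s t * dS k s t * τ s t + 2 * (k s t)^2 * dS τ s t := by
    intro s t
    have hk := hasDerivAt_dS hksm s t
    have hτ := hasDerivAt_dS hτsm s t
    have h := HasDerivAt.deriv (f := fun x => 2 * (k x t)^2 * τ x t) (((hk.pow 2).const_mul (2:ℝ)).mul hτ)
    rw [h]; simp only [Pi.pow_apply]; ring
  have hdSν : ∀ s t, dS ν s t = 0 := by
    intro s t
    have : (fun x => ν x t) = fun _ => (0:ℝ) := funext fun x => hν0 x t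
    simp [dS, this]
  have hdSα : ∀ s t, dS α s t = dS k s t := by
    intro s t
    have : (fun x => α x t) = fun x => k x t := funext fun x => hαk x t
    simp [dS, this]
  constructor
  · intro s t
    rw [hEderiv s t, hdSν, hdSα, hαk, hν0]
    ring
  -- Part 2
  -- dT γ = k • B
  have hdTγ : ∀ s t, dT γ s t = k s t • B s t := by
    intro s t
    rw [hkin, hν0, hμ0, hαk]
    simp
  -- dT T = dS k • B - (k τ) • N
  have hTt : ∀ s t, dT T s t = dS k s t • B s t - (k s t * τ s t) • N s t := by
    intro s t
    have h1 : dT T s t = dS (dT γ) s t := by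
      have he : (fun x => T s x) = fun x => dS γ s x := funext fun x => (hTdef s x).symm
      show deriv (fun x => T s x) t = _
      rw [he]
      exact (hmixγ s t).symm
    rw [h1]
    have he2 : (fun x => dT γ x t) = fun x => k x t • B x t := funext fun x => hdTγ x t
    show deriv (fun x => dT γ x t) s = _
    rw [he2]
    have hk := hasDerivAt_dS hksm s t
    have hB := hasDerivAt_dS hBsm s t
    rw [HasDerivAt.deriv (f := fun x => k x t • B x t) (hk.smul hB), hFS3]
    module
  -- ⟪dT N, N⟫ = 0
  have hNN : ∀ s t, ⟪dT N s t, N s t⟫ = 0 := by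
    intro s t
    have h1 := hasDerivAt_dT hNsm s t
    have h2 : HasDerivAt (fun x => (⟪N s x, N s x⟫ : ℝ))
        (⟪N s t, dT N s t⟫ + ⟪dT N s t, N s t⟫) t := h1.inner ℝ h1
    have h3 : (fun x => (⟪N s x, N s x⟫ : ℝ)) = fun _ => (1:ℝ) :=
      funext fun x => (horth s x).2.1
    rw [h3] at h2
    have h4 := h2.unique (hasDerivAt_const t (1:ℝ))
    rw [real_inner_comm (dT N s t) (N s t)] at h4
    linarith
  -- evolution of curvature
  have hkt : ∀ s t, dT k s t = -(2 * dS k s t * τ s t + k s t * dS τ s t) := by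
    intro s t
    -- dS (dT T) computed explicitly
    have hfun : (fun x => dT T x t) =
        fun x => dS k x t • B x t - (k x t * τ x t) • N x t :=
      funext fun x => hTt x t
    have hd1 : HasDerivAt (fun x => dS k x t) (dS (dS k) s t) s :=
      hasDerivAt_dS (dS_contDiff hksm) s t
    have hdB := hasDerivAt_dS hBsm s t
    have hdN := hasDerivAt_dS hNsm s t
    have hdk := hasDerivAt_dS hksm s t
    have hdτ := hasDerivAt_dS hτsm s t
    have hE : dS (dT T) s t =
        (dS k s t • dS B s t + dS (dS k) s t • B s t) -
          ((k s t * τ s t) • dS N s t +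
            (dS k s t * τ s t + k s t * dS τ s t) • N s t) := by
      show deriv (fun x => dT T x t) s = _
      rw [hfun]
      exact ((hd1.smul hdB).sub ((hdk.mul hdτ).smul hdN)).deriv
    -- dT (dS T) computed explicitly
    have hW : dT (dS T) s t = k s t • dT N s t + dT k s t • N s t := by
      have he : (fun x => dS T s x) = fun x => k s x • N s x := funext fun x => hFS1 s x
      show deriv (fun x => dS T s x) t = _
      rw [he]
      exact ((hasDerivAt_dT hksm s t).smul (hasDerivAt_dT hNsm s t)).deriv
    have heq : k s t • dT N s t + dT k s t • N s t =
        (dS k s t • dS B s t + dS (dS k) s t • B s t) -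
          ((k s t * τ s t) • dS N s t +
            (dS k s t * τ s t + k s t * dS τ s t) • N s t) := by
      rw [← hW, ← hE, hmixT]
    have hinner := congrArg (fun v => (⟪v, N s t⟫ : ℝ)) heq
    obtain ⟨hTT, hNN1, hBB, hTN, hTB, hNB⟩ := horth s t
    have hBN : ⟪B s t, N s t⟫ = (0:ℝ) := by rw [real_inner_comm]; exact hNB
    rw [hFS2 s t, hFS3 s t] at hinner
    simp only [inner_add_left, inner_sub_left, real_inner_smul_left, inner_neg_left,
      neg_smul, hNN1, hBN, hTN, hNN s t, mul_zero, mul_one, zero_add, add_zero,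
      mul_neg, neg_mul, sub_zero, zero_sub, neg_zero] at hinner
    linarith [hinner]
  -- pointwise: d/dt (k^2) = -(d/ds (2 k^2 τ))
  have hk2t : ∀ s t, 2 * k s t * dT k s t =
      -(deriv (fun x => 2 * (k x t)^2 * τ x t) s) := by
    intro s t
    rw [hEderiv s t, hkt s t]
    ring
  -- the s-integral of d/ds (2k^2 τ) over a period vanishes
  have hint0 : ∀ t, (∫ s in (0:ℝ)..L, 2 * k s t * dT k s t) = 0 := by
    intro t
    have hco : (fun s => 2 * k s t * dT k s t) =
        fun s => -(deriv (fun x => 2 * (k x t)^2 * τ x t) s) :=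
      funext fun s => hk2t s t
    rw [hco]
    rw [intervalIntegral.integral_neg]
    have hsm : ContDiff ℝ (⊤ : ℕ∞) (Function.uncurry (fun s t => 2 * (k s t)^2 * τ s t)) := by
      have : Function.uncurry (fun s t => 2 * (k s t)^2 * τ s t) =
          fun p => 2 * (Function.uncurry k p)^2 * Function.uncurry τ p := rfl
      rw [this]
      exact (contDiff_const.mul (hksm.pow 2)).mul hτsm
    have hdiff : ∀ x ∈ Set.uIcc (0:ℝ) L,
        DifferentiableAt ℝ (fun x => 2 * (k x t)^2 * τ x t) x := fun x _ =>
      ((sliceS_contDiff hsm t).differentiable (by simp) x)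
    have hcont : Continuous (deriv (fun x => 2 * (k x t)^2 * τ x t)) := by
      have : deriv (fun x => 2 * (k x t)^2 * τ x t) =
          fun x => dS (fun s t => 2 * (k s t)^2 * τ s t) x t := rfl
      rw [this]
      exact (dS_contDiff hsm).continuous.comp (continuous_id.prodMk continuous_const)
    rw [intervalIntegral.integral_deriv_eq_sub hdiff (hcont.intervalIntegrable 0 L)]
    have hkL : k L t = k 0 t := by simpa using hkper 0 t
    have hτL : τ L t = τ 0 t := by simpa using hτper 0 t
    rw [hkL, hτL]
    ring
  -- I(t) has derivative 0 everywhere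
  have hI : ∀ t₀, HasDerivAt (fun t => ∫ s in (0:ℝ)..L, (k s t)^2) 0 t₀ := by
    intro t₀
    have hkc : Continuous (fun p : ℝ × ℝ => k p.1 p.2) := hksm.continuous
    have hdTc : Continuous (fun p : ℝ × ℝ => dT k p.1 p.2) := (dT_contDiff hksm).continuous
    have hFc : Continuous (fun p : ℝ × ℝ => 2 * k p.1 p.2 * dT k p.1 p.2) :=
      (continuous_const.mul hkc).mul hdTc
    obtain ⟨C, hC⟩ := (((isCompact_uIcc (a := (0:ℝ)) (b := L)).prod
        (isCompact_closedBall t₀ 1))).exists_bound_of_continuousOn hFc.continuousOn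
    have key := intervalIntegral.hasDerivAt_integral_of_dominated_loc_of_deriv_le
      (𝕜 := ℝ) (μ := MeasureTheory.volume)
      (F := fun x s => (k s x)^2) (F' := fun x s => 2 * k s x * dT k s x)
      (x₀ := t₀) (a := 0) (b := L) (bound := fun _ => C) (s := Metric.ball t₀ 1)
      (Metric.ball_mem_nhds t₀ (by norm_num))
      (Filter.Eventually.of_forall fun x =>
        (((sliceS_contDiff hksm x).continuous.pow 2)).aestronglyMeasurable)
      ((((sliceS_contDiff hksm t₀).continuous.pow 2)).intervalIntegrable 0 L)
      ((hFc.comp (continuous_id.prodMk continuous_const)).aestronglyMeasurable)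
      (Filter.Eventually.of_forall fun s => fun hs => fun x hx =>
        hC (s, x) ⟨Set.uIoc_subset_uIcc hs, Metric.ball_subset_closedBall hx⟩)
      intervalIntegrable_const
      (Filter.Eventually.of_forall fun s => fun hs => fun x hx => by
        have h : HasDerivAt (fun x => k s x ^ 2) _ x := (hasDerivAt_dT hksm s x).pow 2
        simpa using h)
    have h2 := key.2
    rw [hint0 t₀] at h2
    exact h2
  have hconst : ∀ t₁ t₂, (∫ s in (0:ℝ)..L, (k s t₁)^2) = ∫ s in (0:ℝ)..L, (k s t₂)^2 := by
    intro t₁ t₂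
    exact is_const_of_deriv_eq_zero (fun x => (hI x).differentiableAt)
      (fun x => (hI x).deriv) t₁ t₂
  exact hconst
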